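/- arXiv:2602.13682 — 3 statements merged into one kernel-verified Lean document; each statement's English description precedes it below -/
import Mathlib

section
/- Completeness of Merkle verification: for any vector of 2^D leaves and any index k, the opening consisting of the leaf at index k together with the sibling hashes along the path from leaf k to the root (with direction bits given by the binary representation of k) verifies against the Merkle root of the vector. -/
variable {α : Type*}

/-- Merkle root of a vector of `2^D` leaves, built by recursive pairing via `H`. -/
def merkleRoot (H : α → α → α) : (D : ℕ) → (Fin (2 ^ D) → α) → α
  | 0, v => v ⟨0, by norm_num⟩
  | D + 1, v =>
      H (merkleRoot H D (fun i => v ⟨i.1, by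
            have h := i.2
            have h2 : 2 ^ (D + 1) = 2 ^ D + 2 ^ D := by rw [pow_succ]; omega
            omega⟩))
        (merkleRoot H D (fun i => v ⟨2 ^ D + i.1, by
            have h := i.2
            have h2 : 2 ^ (D + 1) = 2 ^ D + 2 ^ D := by rw [pow_succ]; omega
            omega⟩))

/-- Merkle inclusion path (sibling direction bit and sibling hash at each level,
from the leaf level up to the root) of the leaf at position `k`. A direction bit
`true` means the sibling is a left child. -/
def merklePath (H : α → α → α) : (D : ℕ) → (Fin (2 ^ D) → α) → ℕ → List (Bool × α)
  | 0, _, _ => []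
  | D + 1, v, k =>
      let left : Fin (2 ^ D) → α := fun i => v ⟨i.1, by
            have h := i.2
            have h2 : 2 ^ (D + 1) = 2 ^ D + 2 ^ D := by rw [pow_succ]; omega
            omega⟩
      let right : Fin (2 ^ D) → α := fun i => v ⟨2 ^ D + i.1, by
            have h := i.2
            have h2 : 2 ^ (D + 1) = 2 ^ D + 2 ^ D := by rw [pow_succ]; omega
            omega⟩
      if k < 2 ^ D then
        merklePath H D left k ++ [(false, merkleRoot H D right)]
      else
        merklePath H D right (k - 2 ^ D) ++ [(true, merkleRoot H D left)]

/-- Iterative Merkle verification: start from the leaf and fold over the list of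
(direction bit, sibling hash) pairs, hashing the sibling on the left if the bit is `true`. -/
def merkleVerify (H : α → α → α) : α → List (Bool × α) → α
  | x, [] => x
  | x, (b, h) :: rest => merkleVerify H (if b then H h x else H x h) rest

/-- Merkle verification taking the direction bits and sibling hashes as two lists. -/
def merkleVerify2 (H : α → α → α) : α → List Bool → List α → α
  | x, b :: bs, h :: hs => merkleVerify2 H (if b then H h x else H x h) bs hs
  | x, _, _ => x


theorem merkleVerify_append_false (H : α → α → α) (x : α) (p : List (Bool × α)) (h : α) :
    merkleVerify H x (p ++ [(false, h)]) = H (merkleVerify H x p) h := by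
  induction p generalizing x with
  | nil => simp [merkleVerify]
  | cons a rest ih => obtain ⟨b', h'⟩ := a; simp [merkleVerify, ih]

theorem merkleVerify_append_true (H : α → α → α) (x : α) (p : List (Bool × α)) (h : α) :
    merkleVerify H x (p ++ [(true, h)]) = H h (merkleVerify H x p) := by
  induction p generalizing x with
  | nil => simp [merkleVerify]
  | cons a rest ih => obtain ⟨b', h'⟩ := a; simp [merkleVerify, ih]

/-- completeness of Merkle verification: the honest opening of leaf `k`
(leaf value together with the sibling hashes along the path, direction bits given by
the binary representation of `k`) verifies against the Merkle root. -/
theorem merkle_completeness (H : α → α → α) (D : ℕ) (v : Fin (2 ^ D) → α)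
    (k : Fin (2 ^ D)) :
    merkleVerify H (v k) (merklePath H D v k.1) = merkleRoot H D v := by
  induction D with
  | zero => simp [merklePath, merkleVerify, merkleRoot]; congr; omega
  | succ D ih =>
    obtain ⟨k, hk⟩ := k
    have h2 : 2 ^ (D + 1) = 2 ^ D + 2 ^ D := by rw [pow_succ]; omega
    rw [merklePath, merkleRoot]
    by_cases h : k < 2 ^ D
    · simp only [h, if_true]
      rw [merkleVerify_append_false]
      congr 1
      exact ih (fun i : Fin (2 ^ D) => v ⟨i.1, by omega⟩) ⟨k, h⟩
    · simp only [h, if_false]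
      rw [merkleVerify_append_true]
      congr 1
      have : v ⟨k, hk⟩ = (fun i : Fin (2^D) => v ⟨2 ^ D + i.1, by omega⟩) ⟨k - 2^D, by omega⟩ := by
        congr 1; ext; simp; omega
      rw [this]
      exact ih (fun i : Fin (2 ^ D) => v ⟨2 ^ D + i.1, by omega⟩) ⟨k - 2 ^ D, by omega⟩
end

section
/- Root binding: if H is injective and two Merkle trees over the same number of leaves have different leaf vectors, then their roots differ; consequently a proof path valid against one root cannot be valid against the other root for the differing index with consistent leaf values. -/
variable {α : Type*}

/-- root binding: if `H` is injective and two Merkle trees over the same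
number of leaves have different leaf vectors, their roots differ; consequently an opening
valid against one root cannot be valid against the other root. -/
theorem root_binding (H : α → α → α)
    (hH : Function.Injective fun p : α × α => H p.1 p.2)
    (D : ℕ) (v v' : Fin (2 ^ D) → α) (hne : v ≠ v') :
    merkleRoot H D v ≠ merkleRoot H D v' ∧
    ∀ (x : α) (bs : List Bool) (hs : List α),
      merkleVerify2 H x bs hs = merkleRoot H D v →
      merkleVerify2 H x bs hs ≠ merkleRoot H D v' := by
  have key : ∀ (D : ℕ) (v v' : Fin (2 ^ D) → α),
      merkleRoot H D v = merkleRoot H D v' → v = v' := by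
    intro D
    induction D with
    | zero =>
      intro v v' h
      funext i
      have hi : i = ⟨0, by norm_num⟩ := Fin.ext (by have := i.2; omega)
      rw [hi]; exact h
    | succ D ih =>
      intro v v' h
      simp only [merkleRoot] at h
      have hp := hH (show (fun p : α × α => H p.1 p.2) (_, _) = (fun p : α × α => H p.1 p.2) (_, _) from h)
      have hl := ih _ _ (congrArg Prod.fst hp)
      have hr := ih _ _ (congrArg Prod.snd hp)
      funext i
      by_cases hc : i.1 < 2 ^ D
      · have := congrFun hl ⟨i.1, hc⟩
        simpa using this
      · have h2 : 2 ^ (D + 1) = 2 ^ D + 2 ^ D := by rw [pow_succ]; omega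
        have hi2 : i.1 - 2 ^ D < 2 ^ D := by have := i.2; omega
        have := congrFun hr ⟨i.1 - 2 ^ D, hi2⟩
        simp only at this
        have hi : i = ⟨2 ^ D + (i.1 - 2 ^ D), by omega⟩ := Fin.ext (by simp; omega)
        rw [hi]; exact this
  have hroot : merkleRoot H D v ≠ merkleRoot H D v' := fun h => hne (key D v v' h)
  exact ⟨hroot, fun x bs hs h1 h2 => hroot (h1 ▸ h2)⟩
end

section
/- Merkle verification as a fold: the iterative verification procedure (initialize x with the leaf, then fold over the list of (direction bit, sibling hash) pairs applying x ↦ H(h, x) or x ↦ H(x, h)) computes, when the direction bits are the binary digits of index k and the siblings are taken from the tree of a leaf vector v, exactly the Merkle root of v. -/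
variable {α : Type*}

lemma merkleVerify_append (H : α → α → α) (x : α) (l : List (Bool × α)) (b : Bool) (h : α) :
    merkleVerify H x (l ++ [(b, h)]) =
      if b then H h (merkleVerify H x l) else H (merkleVerify H x l) h := by
  induction l generalizing x with
  | nil => rfl
  | cons p rest ih => obtain ⟨b', h'⟩ := p; simp [merkleVerify, ih]

lemma merkle_aux (H : α → α → α) (D : ℕ) (v : Fin (2 ^ D) → α) (k : ℕ) (hk : k < 2 ^ D) :
    (merklePath H D v k).map Prod.fst = (List.range D).map k.testBit ∧
    merkleVerify H (v ⟨k, hk⟩) (merklePath H D v k) = merkleRoot H D v := by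
  induction D generalizing k with
  | zero =>
    interval_cases k
    exact ⟨rfl, rfl⟩
  | succ D ih =>
    have h2 : 2 ^ (D + 1) = 2 ^ D + 2 ^ D := by rw [pow_succ]; omega
    rw [merklePath]
    by_cases hlt : k < 2 ^ D
    · simp only [hlt, if_true]
      obtain ⟨ihb, ihv⟩ := ih _ k hlt
      constructor
      · rw [List.map_append, ihb, List.range_succ, List.map_append]
        simp [Nat.testBit_lt_two_pow hlt]
      · rw [merkleVerify_append]
        simp only [if_neg Bool.false_ne_true]
        rw [merkleRoot]
        exact congrArg₂ H ihv rfl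
    · simp only [hlt, if_false]
      have hk' : k - 2 ^ D < 2 ^ D := by omega
      obtain ⟨ihb, ihv⟩ := ih _ (k - 2 ^ D) hk'
      have hkeq : 2 ^ D + (k - 2 ^ D) = k := by omega
      constructor
      · rw [List.map_append, ihb, List.range_succ, List.map_append]
        congr 1
        · apply List.map_congr_left
          intro i hi
          rw [List.mem_range] at hi
          conv_rhs => rw [← hkeq]
          rw [Nat.testBit_two_pow_add_gt hi]
        · have : k.testBit D = true := by
            rw [← hkeq, Nat.testBit_two_pow_add_eq, Nat.testBit_lt_two_pow hk']
            rfl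
          simp [this]
      · rw [merkleVerify_append]
        simp only [if_pos rfl]
        rw [merkleRoot]
        have hv : v ⟨k, hk⟩ = v ⟨2 ^ D + ((⟨k - 2 ^ D, hk'⟩ : Fin (2 ^ D)) : ℕ), by
            simp; omega⟩ := congrArg v (Fin.ext (by simp; omega))
        rw [hv]
        exact congrArg₂ H rfl ihv

/-- Merkle verification as a fold: when the direction bits are the binary
digits of the index `k` and the siblings are taken from the tree of the leaf vector `v`
(i.e. the honest path of leaf `k`), the iterative fold starting from the leaf computes
exactly the Merkle root of `v`. -/
theorem merkle_verify_fold_computes_root (H : α → α → α) (D : ℕ)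
    (v : Fin (2 ^ D) → α) (k : Fin (2 ^ D)) :
    (merklePath H D v k.1).map Prod.fst = (List.range D).map k.1.testBit ∧
    merkleVerify H (v k) (merklePath H D v k.1) = merkleRoot H D v := by
  have := merkle_aux H D v k.1 k.2
  simpa using this
end
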